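/- Let ζ : ℝ → ℝ² be a smooth 2π-periodic map with |ζ'(t)| = 1 for all t and ζ injective on [0, 2π) (an arc-length parameterization of a smooth Jordan curve), and let ν(t) := (ζ₂'(t), −ζ₁'(t), 0) ∈ ℝ³ be the associated unit normal field. Fix κ ≠ 0 and define, for C¹ maps m : [−1,1] × ℝ → ℝ³ with |m(z,t)| = 1 for all (z,t) and m(z, t + 2π) = m(z,t), the energy E(m) := ∫_{−1}^{1} ∫_{−π}^{π} ( |∂_z m(z,t)|² + |∂_t m(z,t)|² + κ² |m(z,t) × ν(t)|² ) dt dz. If m minimizes E among all maps in this class, then ∂_z m ≡ 0 on [−1,1] × ℝ, i.e. m(z,t) = m(0,t) for all z and t. -/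

import Mathlib

open Real Set MeasureTheory

/-- Squared Euclidean norm of a vector in `ℝ³`. -/
noncomputable def sq3 (v : Fin 3 → ℝ) : ℝ := v 0 ^ 2 + v 1 ^ 2 + v 2 ^ 2

/-- The unit normal field `ν(t) = (ζ₂'(t), −ζ₁'(t), 0)` associated with an
arc-length parameterized planar curve `ζ`. -/
noncomputable def normalField (ζ : ℝ → Fin 2 → ℝ) (t : ℝ) : Fin 3 → ℝ :=
  ![deriv ζ t 1, -(deriv ζ t 0), 0]

/-- The admissible class: `C¹` maps `m : [−1,1] × ℝ → ℝ³` (represented by `C¹`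
maps on `ℝ²`), of pointwise unit norm and `2π`-periodic in the angular variable. -/
def AdmissibleCyl (m : ℝ → ℝ → Fin 3 → ℝ) : Prop :=
  ContDiff ℝ 1 (fun p : ℝ × ℝ => m p.1 p.2) ∧
  (∀ z t : ℝ, sq3 (m z t) = 1) ∧
  (∀ z t : ℝ, m z (t + 2 * π) = m z t)

/-- The micromagnetic energy on the cylinder generated by the curve with normal `ν`. -/
noncomputable def cylEnergy (κ : ℝ) (ν : ℝ → Fin 3 → ℝ) (m : ℝ → ℝ → Fin 3 → ℝ) : ℝ :=
  ∫ z in (-1 : ℝ)..1, ∫ t in (-π)..π,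
    (sq3 (deriv (fun w => m w t) z) + sq3 (deriv (fun s => m z s) t)
      + κ ^ 2 * sq3 (crossProduct (m z t) (ν t)))

set_option maxHeartbeats 1000000

lemma sq3_nonneg (v : Fin 3 → ℝ) : 0 ≤ sq3 v := by unfold sq3; positivity

lemma sq3_eq_zero {v : Fin 3 → ℝ} (h : sq3 v = 0) : v = 0 := by
  unfold sq3 at h
  have h0 : v 0 = 0 ∧ v 1 = 0 ∧ v 2 = 0 := by
    constructor
    · nlinarith [sq_nonneg (v 0), sq_nonneg (v 1), sq_nonneg (v 2)]
    constructor
    · nlinarith [sq_nonneg (v 0), sq_nonneg (v 1), sq_nonneg (v 2)]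
    · nlinarith [sq_nonneg (v 0), sq_nonneg (v 1), sq_nonneg (v 2)]
  funext i
  fin_cases i <;> simp [h0.1, h0.2.1, h0.2.2]

lemma sq3_zero : sq3 0 = 0 := by simp [sq3]

lemma continuous_sq3 : Continuous sq3 := by
  unfold sq3
  fun_prop

lemma continuous_cross : Continuous (fun p : (Fin 3 → ℝ) × (Fin 3 → ℝ) =>
    sq3 (crossProduct p.1 p.2)) := by
  have : ∀ p : (Fin 3 → ℝ) × (Fin 3 → ℝ), crossProduct p.1 p.2 =
      ![p.1 1 * p.2 2 - p.1 2 * p.2 1, p.1 2 * p.2 0 - p.1 0 * p.2 2,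
        p.1 0 * p.2 1 - p.1 1 * p.2 0] := by
    intro p; rw [cross_apply]
  simp only [this, sq3]
  simp only [Matrix.cons_val_zero, Matrix.cons_val_one, Matrix.head_cons,
    Matrix.cons_val_two, Matrix.tail_cons]
  fun_prop

lemma eqzero_of_integral_zero {f : ℝ → ℝ} {a b : ℝ} (hab : a < b) (hf : Continuous f)
    (h0 : ∀ x, 0 ≤ f x) (hI : ∫ x in a..b, f x = 0) : ∀ x ∈ Icc a b, f x = 0 := by
  by_contra hcon
  push_neg at hcon
  obtain ⟨x0, hx0, hne⟩ := hcon
  have hpos : 0 < f x0 := lt_of_le_of_ne (h0 x0) (Ne.symm hne)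
  set ε := f x0 / 2 with hε
  have hεpos : 0 < ε := by positivity
  obtain ⟨δ, hδ, hball⟩ := Metric.continuous_iff.mp hf x0 ε hεpos
  set c := max a (x0 - δ / 2) with hc
  set d := min b (x0 + δ / 2) with hd
  have hcd : c < d := by
    apply max_lt <;> apply lt_min
    · exact hab
    · linarith [hx0.1]
    · linarith [hx0.2]
    · linarith
  have hac : a ≤ c := le_max_left _ _
  have hdb : d ≤ b := min_le_left _ _
  have hlow : ∀ y ∈ Icc c d, ε ≤ f y := by
    intro y hy
    have h1 : x0 - δ / 2 ≤ y := le_trans (le_max_right _ _) hy.1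
    have h2 : y ≤ x0 + δ / 2 := le_trans hy.2 (min_le_right _ _)
    have : dist y x0 < δ := by
      rw [Real.dist_eq]
      rw [abs_lt]; constructor <;> linarith
    have := hball y this
    rw [Real.dist_eq, abs_lt] at this
    linarith [this.1, this.2]
  have hint : ∀ u v : ℝ, IntervalIntegrable f volume u v := fun u v =>
    hf.intervalIntegrable u v
  have hsplit : (∫ x in a..b, f x) =
      (∫ x in a..c, f x) + (∫ x in c..d, f x) + (∫ x in d..b, f x) := by
    rw [intervalIntegral.integral_add_adjacent_intervals (hint a c)
      (hint c d), intervalIntegral.integral_add_adjacent_intervals ((hint a c).trans (hint c d)) (hint d b)]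
  have h1 : 0 ≤ ∫ x in a..c, f x :=
    intervalIntegral.integral_nonneg hac (fun x _ => h0 x)
  have h3 : 0 ≤ ∫ x in d..b, f x :=
    intervalIntegral.integral_nonneg hdb (fun x _ => h0 x)
  have h2 : ε * (d - c) ≤ ∫ x in c..d, f x := by
    have := intervalIntegral.integral_mono_on (le_of_lt hcd)
      (intervalIntegrable_const) (hint c d) hlow
    rwa [intervalIntegral.integral_const, smul_eq_mul, mul_comm] at this
  have : 0 < ε * (d - c) := by
    apply mul_pos hεpos; linarith
  linarith [hsplit ▸ hI]

/-- **z-invariance of energy minimizers** on a general cylindrical surface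
`C = [−1,1] × Γ`, with `Γ` a smooth Jordan curve parameterized by arc length. -/
theorem z_invariance_of_energy_minimizers
    (ζ : ℝ → Fin 2 → ℝ)
    (hζsmooth : ContDiff ℝ (⊤ : ℕ∞) ζ)
    (hζper : ∀ t : ℝ, ζ (t + 2 * π) = ζ t)
    (hζunit : ∀ t : ℝ, (deriv ζ t 0) ^ 2 + (deriv ζ t 1) ^ 2 = 1)
    (hζinj : Set.InjOn ζ (Ico (0 : ℝ) (2 * π)))
    (κ : ℝ) (hκ : κ ≠ 0)
    (m : ℝ → ℝ → Fin 3 → ℝ)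
    (hm : AdmissibleCyl m)
    (hmin : ∀ m' : ℝ → ℝ → Fin 3 → ℝ, AdmissibleCyl m' →
      cylEnergy κ (normalField ζ) m ≤ cylEnergy κ (normalField ζ) m') :
    ∀ z ∈ Icc (-1 : ℝ) 1, ∀ t : ℝ,
      deriv (fun w => m w t) z = 0 ∧ m z t = m 0 t := by
  obtain ⟨hsm, hnorm, hper⟩ := hm
  set ν := normalField ζ with hν
  set f : ℝ × ℝ → Fin 3 → ℝ := fun p => m p.1 p.2 with hfdef
  have hdiff := contDiff_one_iff_fderiv.mp hsm
  -- partial derivative facts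
  have hder1 : ∀ z t : ℝ, HasDerivAt (fun w => m w t) (fderiv ℝ f (z, t) (1, 0)) z := by
    intro z t
    have h1 : HasDerivAt (fun w : ℝ => (w, t)) ((1 : ℝ), (0 : ℝ)) z :=
      HasDerivAt.prodMk (hasDerivAt_id z) (hasDerivAt_const z t)
    exact ((hdiff.1 (z, t)).hasFDerivAt).comp_hasDerivAt z h1
  have hder2 : ∀ z t : ℝ, HasDerivAt (fun s => m z s) (fderiv ℝ f (z, t) (0, 1)) t := by
    intro z t
    have h1 : HasDerivAt (fun s : ℝ => (z, s)) ((0 : ℝ), (1 : ℝ)) t :=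
      HasDerivAt.prodMk (hasDerivAt_const t z) (hasDerivAt_id t)
    exact ((hdiff.1 (z, t)).hasFDerivAt).comp_hasDerivAt t h1
  have hderiv1 : ∀ z t : ℝ, deriv (fun w => m w t) z = fderiv ℝ f (z, t) (1, 0) :=
    fun z t => (hder1 z t).deriv
  have hderiv2 : ∀ z t : ℝ, deriv (fun s => m z s) t = fderiv ℝ f (z, t) (0, 1) :=
    fun z t => (hder2 z t).deriv
  -- continuity
  have hcν : Continuous ν := by
    have hdζ : Continuous (deriv ζ) := hζsmooth.continuous_deriv (by simp)
    rw [hν]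
    unfold normalField
    apply continuous_pi
    intro i
    fin_cases i <;> simp <;> fun_prop
  have hcD1 : Continuous (fun p : ℝ × ℝ => fderiv ℝ f p (1, 0)) :=
    hdiff.2.clm_apply continuous_const
  have hcD2 : Continuous (fun p : ℝ × ℝ => fderiv ℝ f p (0, 1)) :=
    hdiff.2.clm_apply continuous_const
  set A : ℝ × ℝ → ℝ := fun p => sq3 (fderiv ℝ f p (1, 0)) with hAdef
  set B : ℝ × ℝ → ℝ := fun p =>
    sq3 (fderiv ℝ f p (0, 1)) + κ ^ 2 * sq3 (crossProduct (f p) (ν p.2)) with hBdef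
  have hA : Continuous A := continuous_sq3.comp hcD1
  have hB : Continuous B := by
    apply Continuous.add (continuous_sq3.comp hcD2)
    exact continuous_const.mul
      (continuous_cross.comp (hsm.continuous.prodMk (hcν.comp continuous_snd)))
  have hAnn : ∀ p, 0 ≤ A p := fun p => sq3_nonneg _
  have hIntA : ∀ z : ℝ, IntervalIntegrable (fun t => A (z, t)) volume (-π) π :=
    fun z => (hA.comp (Continuous.prodMk_right z)).intervalIntegrable _ _
  have hIntB : ∀ z : ℝ, IntervalIntegrable (fun t => B (z, t)) volume (-π) π :=
    fun z => (hB.comp (Continuous.prodMk_right z)).intervalIntegrable _ _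
  set g : ℝ → ℝ := fun z => ∫ t in (-π)..π, B (z, t) with hgdef
  set h : ℝ → ℝ := fun z => ∫ t in (-π)..π, A (z, t) with hhdef
  have hgc : Continuous g :=
    intervalIntegral.continuous_parametric_intervalIntegral_of_continuous'
      (f := fun z t => B (z, t)) (by exact hB) _ _
  have hhc : Continuous h :=
    intervalIntegral.continuous_parametric_intervalIntegral_of_continuous'
      (f := fun z t => A (z, t)) (by exact hA) _ _
  have hhnn : ∀ z, 0 ≤ h z :=
    fun z => intervalIntegral.integral_nonneg (by linarith [pi_pos]) (fun t _ => hAnn _)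
  -- rewrite the energy of m
  have hE : cylEnergy κ ν m = ∫ z in (-1 : ℝ)..1, (h z + g z) := by
    unfold cylEnergy
    apply intervalIntegral.integral_congr
    intro z _
    rw [hhdef, hgdef]
    dsimp only
    rw [← intervalIntegral.integral_add (hIntA z) (hIntB z)]
    apply intervalIntegral.integral_congr
    intro t _
    simp only [hAdef, hBdef, hderiv1, hderiv2, hfdef]
    ring
  -- the minimum point of g on [-1,1]
  obtain ⟨z0, hz0mem, hz0min⟩ :=
    isCompact_Icc.exists_isMinOn (by norm_num : (Icc (-1 : ℝ) 1).Nonempty) hgc.continuousOn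
  -- competitor
  set m' : ℝ → ℝ → Fin 3 → ℝ := fun _ t => m z0 t with hm'def
  have hadm' : AdmissibleCyl m' := by
    refine ⟨?_, fun z t => hnorm z0 t, fun z t => hper z0 t⟩
    exact hsm.comp (contDiff_const.prodMk contDiff_snd)
  have hcomp : cylEnergy κ ν m' = 2 * g z0 := by
    unfold cylEnergy
    have hin : ∀ z : ℝ, (∫ t in (-π)..π,
        (sq3 (deriv (fun w => m' w t) z) + sq3 (deriv (fun s => m' z s) t)
          + κ ^ 2 * sq3 (crossProduct (m' z t) (ν t)))) = g z0 := by
      intro z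
      rw [hgdef]
      apply intervalIntegral.integral_congr
      intro t _
      simp only [hm'def, hBdef, hfdef]
      rw [deriv_const, sq3_zero, hderiv2 z0 t]
      ring
    rw [intervalIntegral.integral_congr (g := fun _ => g z0) (fun z _ => hin z),
      intervalIntegral.integral_const]
    norm_num
  have key0 : cylEnergy κ ν m ≤ 2 * g z0 := hcomp ▸ hmin m' hadm'
  -- chain of inequalities
  have hIg : IntervalIntegrable g volume (-1) 1 := hgc.intervalIntegrable _ _
  have hIh : IntervalIntegrable h volume (-1) 1 := hhc.intervalIntegrable _ _
  have hgl : (2 : ℝ) * g z0 ≤ ∫ z in (-1 : ℝ)..1, g z := by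
    have := intervalIntegral.integral_mono_on (by norm_num : (-1 : ℝ) ≤ 1)
      (intervalIntegrable_const (c := g z0)) hIg (fun x hx => hz0min hx)
    rw [intervalIntegral.integral_const, smul_eq_mul] at this
    linarith
  have hEsplit : cylEnergy κ ν m = (∫ z in (-1 : ℝ)..1, h z) + ∫ z in (-1 : ℝ)..1, g z := by
    rw [hE, intervalIntegral.integral_add hIh hIg]
  have hInt0 : (∫ z in (-1 : ℝ)..1, h z) = 0 := by
    have h1 : 0 ≤ ∫ z in (-1 : ℝ)..1, h z :=
      intervalIntegral.integral_nonneg (by norm_num) (fun z _ => hhnn z)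
    have h2 : (∫ z in (-1 : ℝ)..1, h z) ≤ 0 := by
      have := hEsplit ▸ key0
      linarith
    linarith
  -- h vanishes, hence A vanishes on the strip
  have hh0 : ∀ z ∈ Icc (-1 : ℝ) 1, h z = 0 :=
    eqzero_of_integral_zero (by norm_num) hhc hhnn hInt0
  have hA0 : ∀ z ∈ Icc (-1 : ℝ) 1, ∀ t : ℝ, A (z, t) = 0 := by
    intro z hz t
    have hzz : ∀ t ∈ Icc (-π) π, A (z, t) = 0 := by
      apply eqzero_of_integral_zero (by linarith [pi_pos])
        (hA.comp (Continuous.prodMk_right z)) (fun t => hAnn _)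
      exact hh0 z hz
    have hperA : Function.Periodic (fun t => A (z, t)) (2 * π) := by
      intro t
      simp only [hAdef]
      have : (fun w => m w (t + 2 * π)) = fun w => m w t := by
        funext w; exact hper w t
      rw [← hderiv1, ← hderiv1 z t, this]
    obtain ⟨y, hy, hyE⟩ := hperA.exists_mem_Ico two_pi_pos t (-π)
    rw [hyE]
    apply hzz
    constructor
    · exact hy.1
    · have := hy.2; linarith
  have hdz : ∀ z ∈ Icc (-1 : ℝ) 1, ∀ t : ℝ, deriv (fun w => m w t) z = 0 := by
    intro z hz t
    apply sq3_eq_zero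
    rw [hderiv1]
    exact hA0 z hz t
  intro z hz t
  refine ⟨hdz z hz t, ?_⟩
  have hsub : uIcc (0 : ℝ) z ⊆ Icc (-1 : ℝ) 1 := by
    rw [uIcc]
    apply Icc_subset_Icc
    · simp only [le_min_iff]; exact ⟨by norm_num, hz.1⟩
    · simp only [max_le_iff]; exact ⟨by norm_num, hz.2⟩
  have hftc : (∫ x in (0 : ℝ)..z, deriv (fun w => m w t) x) = m z t - m 0 t := by
    apply intervalIntegral.integral_deriv_eq_sub
    · exact fun x _ => (hder1 x t).differentiableAt
    · have : (deriv (fun w => m w t)) = fun x => fderiv ℝ f (x, t) (1, 0) := by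
        funext x; exact hderiv1 x t
      rw [this]
      exact ((hcD1.comp (continuous_id.prodMk continuous_const)).intervalIntegrable _ _)
  have hzero : (∫ x in (0 : ℝ)..z, deriv (fun w => m w t) x) = 0 := by
    rw [intervalIntegral.integral_congr (g := fun _ => (0 : Fin 3 → ℝ))
      (fun x hx => hdz x (hsub hx) t)]
    simp
  rw [hzero] at hftc
  exact sub_eq_zero.mp hftc.symm
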